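/- arXiv:2203.16748 — 3 statements merged into one kernel-verified Lean document; each statement's English description precedes it below -/
import Mathlib

section
/- Let D be an m × n matrix over a field, and suppose R = DV with V invertible upper-triangular and R reduced. Then for every column index j with column j of R nonzero, low_R(j) equals the maximal row index i such that the rank of the lower-left submatrix D[i..m, 1..j] exceeds the rank of D[i..m, 1..j-1]; in particular low_R(j) does not depend on the choice of V. (Pairing Uniqueness via ranks of lower-left submatrices.) -/
open Matrix

variable {F : Type*} [Field F] [DecidableEq F] {m n : ℕ}

/-- The 1-based row index of the lowest nonzero entry of column `j`; `0` if zero column. -/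
def lowNat (R : Matrix (Fin m) (Fin n) F) (j : Fin n) : ℕ :=
  (Finset.univ.filter fun i : Fin m => R i j ≠ 0).sup fun i => i.val + 1

def ReducedMat (R : Matrix (Fin m) (Fin n) F) : Prop :=
  ∀ j₁ j₂ : Fin n, lowNat R j₁ = lowNat R j₂ → lowNat R j₁ ≠ 0 → j₁ = j₂

def UpperTriFin (V : Matrix (Fin n) (Fin n) F) : Prop :=
  ∀ i j : Fin n, j < i → V i j = 0

/-- Rank of the lower-left submatrix `D[i..m, 1..j]` (1-based), implemented by
zeroing out all entries outside of rows `i..m` and columns `1..j`. -/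
noncomputable def lowerLeftRank (D : Matrix (Fin m) (Fin n) F) (i j : ℕ) : ℕ :=
  (Matrix.of fun r : Fin m => fun c : Fin n =>
    if i ≤ r.val + 1 ∧ c.val + 1 ≤ j then D r c else 0).rank

/-! ### Auxiliary definitions and lemmas -/

/-- The masked matrix whose rank is `lowerLeftRank`. -/
def maskM (A : Matrix (Fin m) (Fin n) F) (i b : ℕ) : Matrix (Fin m) (Fin n) F :=
  Matrix.of fun r : Fin m => fun c : Fin n =>
    if i ≤ r.val + 1 ∧ c.val + 1 ≤ b then A r c else 0

lemma lowerLeftRank_eq_rank_mask (D : Matrix (Fin m) (Fin n) F) (i b : ℕ) :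
    lowerLeftRank D i b = (maskM D i b).rank := rfl

lemma le_lowNat {R : Matrix (Fin m) (Fin n) F} {r : Fin m} {c : Fin n} (h : R r c ≠ 0) :
    r.val + 1 ≤ lowNat R c :=
  Finset.le_sup (f := fun i : Fin m => i.val + 1)
    (Finset.mem_filter.2 ⟨Finset.mem_univ _, h⟩)

lemma eq_zero_of_lowNat_le {R : Matrix (Fin m) (Fin n) F} {r : Fin m} {c : Fin n}
    (h : lowNat R c ≤ r.val) : R r c = 0 := by
  by_contra hne
  exact absurd (le_lowNat hne) (by omega)

lemma exists_low {R : Matrix (Fin m) (Fin n) F} {c : Fin n} (h : lowNat R c ≠ 0) :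
    ∃ r : Fin m, r.val + 1 = lowNat R c ∧ R r c ≠ 0 := by
  have hne : (Finset.univ.filter fun i : Fin m => R i c ≠ 0).Nonempty := by
    rw [Finset.nonempty_iff_ne_empty]
    intro hemp
    apply h
    unfold lowNat
    rw [hemp, Finset.sup_empty]
    rfl
  obtain ⟨r, hr, hsup⟩ :=
    Finset.exists_mem_eq_sup (Finset.univ.filter fun i : Fin m => R i c ≠ 0) hne
      (fun i : Fin m => i.val + 1)
  exact ⟨r, hsup.symm, (Finset.mem_filter.1 hr).2⟩

lemma rank_mask_mul_le (D : Matrix (Fin m) (Fin n) F) (V : Matrix (Fin n) (Fin n) F)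
    (hV : UpperTriFin V) (i b : ℕ) :
    (maskM (D * V) i b).rank ≤ (maskM D i b).rank := by
  have hfac : maskM (D * V) i b =
      maskM D i b * (Matrix.of fun k c : Fin n => if c.val + 1 ≤ b then V k c else 0) := by
    ext r c
    simp only [maskM, Matrix.of_apply, Matrix.mul_apply]
    by_cases hc : c.val + 1 ≤ b
    · by_cases hr : i ≤ r.val + 1
      · simp only [hr, hc, and_self, if_true, Matrix.mul_apply]
        apply Finset.sum_congr rfl
        intro k _
        by_cases hk : k.val + 1 ≤ b
        · simp [hk, hr, hc]
        · have hVkc : V k c = 0 := hV k c (by omega)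
          simp [hk, hr, hc, hVkc]
      · rw [if_neg (by tauto), eq_comm]
        apply Finset.sum_eq_zero
        intro k _
        rw [if_neg (by tauto), zero_mul]
    · rw [if_neg (by tauto), eq_comm]
      apply Finset.sum_eq_zero
      intro k _
      rw [if_neg hc, mul_zero]
  rw [hfac]
  exact Matrix.rank_mul_le_left _ _

lemma rank_mask_eq (D R : Matrix (Fin m) (Fin n) F) (V : Matrix (Fin n) (Fin n) F)
    (hV : UpperTriFin V) (hVunit : IsUnit V) (hRV : R = D * V) (i b : ℕ) :
    (maskM D i b).rank = (maskM R i b).rank := by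
  have hdet : IsUnit V.det := (Matrix.isUnit_iff_isUnit_det V).1 hVunit
  haveI := V.invertibleOfIsUnitDet hdet
  have hVbt : V.BlockTriangular id := fun a c h => hV a c h
  have hVinvbt : V⁻¹.BlockTriangular id := Matrix.blockTriangular_inv_of_blockTriangular hVbt
  have hVinv : UpperTriFin V⁻¹ := fun a c h => hVinvbt h
  have hD : D = R * V⁻¹ := by
    rw [hRV, Matrix.mul_assoc, Matrix.mul_nonsing_inv V hdet, Matrix.mul_one]
  refine le_antisymm ?_ ?_
  · calc (maskM D i b).rank = (maskM (R * V⁻¹) i b).rank := by rw [← hD]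
      _ ≤ (maskM R i b).rank := rank_mask_mul_le R V⁻¹ hVinv i b
  · calc (maskM R i b).rank = (maskM (D * V) i b).rank := by rw [← hRV]
      _ ≤ (maskM D i b).rank := rank_mask_mul_le D V hV i b

lemma rank_mask_le_card (R : Matrix (Fin m) (Fin n) F) (i b : ℕ) :
    (maskM R i b).rank ≤
      (Finset.univ.filter fun c : Fin n => c.val + 1 ≤ b ∧ i ≤ lowNat R c).card := by
  classical
  set S := Finset.univ.filter fun c : Fin n => c.val + 1 ≤ b ∧ i ≤ lowNat R c with hS
  set M := maskM R i b with hM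
  have h1 : M.rank = Module.finrank F (Submodule.span F (Set.range Mᵀ)) :=
    Matrix.rank_eq_finrank_span_cols M
  have hsub : Set.range Mᵀ ⊆
      (Submodule.span F ((S.image fun c => Mᵀ c : Finset (Fin m → F)) : Set (Fin m → F)) :
        Set (Fin m → F)) := by
    rintro _ ⟨c, rfl⟩
    by_cases hc : c ∈ S
    · exact Submodule.subset_span (Finset.mem_coe.2 (Finset.mem_image_of_mem _ hc))
    · have hc' : ¬ (c.val + 1 ≤ b ∧ i ≤ lowNat R c) := by
        intro h; exact hc (Finset.mem_filter.2 ⟨Finset.mem_univ _, h⟩)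
      have hz : Mᵀ c = 0 := by
        ext r
        simp only [hM, Matrix.transpose_apply, maskM, Matrix.of_apply, Pi.zero_apply]
        by_cases hcb : c.val + 1 ≤ b
        · by_cases hri : i ≤ r.val + 1
          · rw [if_pos ⟨hri, hcb⟩]
            exact eq_zero_of_lowNat_le (by omega)
          · rw [if_neg (by tauto)]
        · rw [if_neg (by tauto)]
      rw [hz]
      exact Submodule.zero_mem _
  have h2 : Submodule.span F (Set.range Mᵀ) ≤
      Submodule.span F ((S.image fun c => Mᵀ c : Finset (Fin m → F)) : Set (Fin m → F)) :=
    Submodule.span_le.2 hsub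
  calc M.rank = Module.finrank F (Submodule.span F (Set.range Mᵀ)) := h1
    _ ≤ Module.finrank F
        (Submodule.span F ((S.image fun c => Mᵀ c : Finset (Fin m → F)) : Set (Fin m → F))) :=
      Submodule.finrank_mono h2
    _ ≤ (S.image fun c => Mᵀ c).card := finrank_span_finset_le_card _
    _ ≤ S.card := Finset.card_image_le

lemma card_le_rank_mask (R : Matrix (Fin m) (Fin n) F) (hred : ReducedMat R)
    (i b : ℕ) (hi : 1 ≤ i) :
    (Finset.univ.filter fun c : Fin n => c.val + 1 ≤ b ∧ i ≤ lowNat R c).card ≤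
      (maskM R i b).rank := by
  classical
  set S := Finset.univ.filter fun c : Fin n => c.val + 1 ≤ b ∧ i ≤ lowNat R c with hS
  set M := maskM R i b with hM
  have hmem : ∀ c : {x : Fin n // x ∈ S}, (c : Fin n).val + 1 ≤ b ∧ i ≤ lowNat R c := by
    intro c
    exact (Finset.mem_filter.1 c.2).2
  have hlow0 : ∀ c : {x : Fin n // x ∈ S}, lowNat R (c : Fin n) ≠ 0 := by
    intro c
    have := (hmem c).2
    omega
  -- pivot rows
  have hpiv : ∀ c : {x : Fin n // x ∈ S},
      ∃ r : Fin m, r.val + 1 = lowNat R (c : Fin n) ∧ R r (c : Fin n) ≠ 0 :=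
    fun c => exists_low (hlow0 c)
  choose f hf1 hf2 using hpiv
  have hfinj : Function.Injective f := by
    intro c₁ c₂ hfc
    have hlow : lowNat R (c₁ : Fin n) = lowNat R (c₂ : Fin n) := by
      rw [← hf1 c₁, ← hf1 c₂, hfc]
    have := hred c₁ c₂ hlow (hlow0 c₁)
    exact Subtype.ext this
  -- the masked columns
  set w : {x : Fin n // x ∈ S} → (Fin m → F) := fun c => Mᵀ (c : Fin n) with hw
  have hwpiv : ∀ c, w c (f c) = R (f c) (c : Fin n) := by
    intro c
    simp only [hw, hM, Matrix.transpose_apply, maskM, Matrix.of_apply]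
    rw [if_pos ⟨by have := hf1 c; have := (hmem c).2; omega, (hmem c).1⟩]
  have hwzero : ∀ c : {x : Fin n // x ∈ S}, ∀ r : Fin m,
      lowNat R (c : Fin n) ≤ r.val → w c r = 0 := by
    intro c r hr
    simp only [hw, hM, Matrix.transpose_apply, maskM, Matrix.of_apply]
    by_cases h : i ≤ r.val + 1 ∧ (c : Fin n).val + 1 ≤ b
    · rw [if_pos h]; exact eq_zero_of_lowNat_le hr
    · rw [if_neg h]
  have hli : LinearIndependent F w := by
    rw [Fintype.linearIndependent_iff]
    intro g hg
    by_contra hgn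
    push_neg at hgn
    obtain ⟨c', hc'⟩ := hgn
    have hTne : (Finset.univ.filter fun c => g c ≠ 0).Nonempty :=
      ⟨c', Finset.mem_filter.2 ⟨Finset.mem_univ _, hc'⟩⟩
    obtain ⟨c₀, hc₀T, hmax⟩ :=
      Finset.exists_max_image (Finset.univ.filter fun c => g c ≠ 0)
        (fun c => (f c).val) hTne
    have hgc₀ : g c₀ ≠ 0 := (Finset.mem_filter.1 hc₀T).2
    have heval : (∑ c, g c • w c) (f c₀) = 0 := by rw [hg]; rfl
    rw [Finset.sum_apply] at heval
    have hsingle : ∑ c, (g c • w c) (f c₀) = g c₀ * w c₀ (f c₀) := by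
      rw [Finset.sum_eq_single c₀]
      · rfl
      · intro c _ hne
        by_cases hgc : g c = 0
        · simp [hgc]
        · have hcT : c ∈ Finset.univ.filter fun c => g c ≠ 0 :=
            Finset.mem_filter.2 ⟨Finset.mem_univ _, hgc⟩
          have hle : (f c).val ≤ (f c₀).val := hmax c hcT
          have hfne : f c ≠ f c₀ := fun h => hne (hfinj h)
          have hlt : (f c).val < (f c₀).val := by
            rcases lt_or_eq_of_le hle with h | h
            · exact h
            · exact absurd (Fin.ext h) hfne
          have : lowNat R (c : Fin n) ≤ (f c₀).val := by
            have := hf1 c; omega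
          rw [Pi.smul_apply, hwzero c (f c₀) this, smul_zero]
      · intro h
        exact absurd (Finset.mem_univ c₀) h
    rw [hsingle] at heval
    have : w c₀ (f c₀) ≠ 0 := by rw [hwpiv c₀]; exact hf2 c₀
    exact this (by
      rcases mul_eq_zero.1 heval with h | h
      · exact absurd h hgc₀
      · exact h)
  have hcard : Module.finrank F (Submodule.span F (Set.range w)) = S.card := by
    rw [finrank_span_eq_card hli, Fintype.card_coe]
  have hsub : Submodule.span F (Set.range w) ≤ Submodule.span F (Set.range Mᵀ) := by
    apply Submodule.span_mono
    rintro _ ⟨c, rfl⟩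
    exact ⟨(c : Fin n), rfl⟩
  calc S.card = Module.finrank F (Submodule.span F (Set.range w)) := hcard.symm
    _ ≤ Module.finrank F (Submodule.span F (Set.range Mᵀ)) := Submodule.finrank_mono hsub
    _ = M.rank := (Matrix.rank_eq_finrank_span_cols M).symm

/-- Pairing uniqueness via ranks of lower-left submatrices: for any reduced
decomposition `R = D V`, the low of a nonzero column `j` is the greatest row `i`
such that `rank D[i..m, 1..j] > rank D[i..m, 1..j-1]`. -/
theorem low_eq_greatest_rank_jump
    (D R : Matrix (Fin m) (Fin n) F) (V : Matrix (Fin n) (Fin n) F)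
    (hV : UpperTriFin V) (hVunit : IsUnit V)
    (hRV : R = D * V) (hred : ReducedMat R) :
    ∀ j : Fin n, lowNat R j ≠ 0 →
      IsGreatest {i : ℕ |
          lowerLeftRank D i j.val < lowerLeftRank D i (j.val + 1)} (lowNat R j) := by
  intro j hj
  have transfer : ∀ i b : ℕ, lowerLeftRank D i b = (maskM R i b).rank := by
    intro i b
    rw [lowerLeftRank_eq_rank_mask]
    exact rank_mask_eq D R V hV hVunit hRV i b
  set L := lowNat R j with hL
  have hL1 : 1 ≤ L := Nat.one_le_iff_ne_zero.2 hj
  constructor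
  · -- membership
    show lowerLeftRank D L j.val < lowerLeftRank D L (j.val + 1)
    rw [transfer, transfer]
    have hSins : (Finset.univ.filter fun c : Fin n => c.val + 1 ≤ j.val + 1 ∧ L ≤ lowNat R c)
        = insert j (Finset.univ.filter fun c : Fin n => c.val + 1 ≤ j.val ∧ L ≤ lowNat R c) := by
      ext c
      simp only [Finset.mem_filter, Finset.mem_univ, true_and, Finset.mem_insert]
      constructor
      · rintro ⟨hc1, hc2⟩
        by_cases hcj : c.val + 1 ≤ j.val
        · exact Or.inr ⟨hcj, hc2⟩
        · have : c.val = j.val := by omega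
          exact Or.inl (Fin.ext this)
      · rintro (rfl | ⟨hc1, hc2⟩)
        · exact ⟨le_refl _, le_refl L⟩
        · exact ⟨by omega, hc2⟩
    have hjnot : j ∉ (Finset.univ.filter fun c : Fin n => c.val + 1 ≤ j.val ∧ L ≤ lowNat R c) := by
      intro h
      have := (Finset.mem_filter.1 h).2.1
      omega
    have h1 : (maskM R L j.val).rank ≤
        (Finset.univ.filter fun c : Fin n => c.val + 1 ≤ j.val ∧ L ≤ lowNat R c).card :=
      rank_mask_le_card R L j.val
    have h2 : (Finset.univ.filter fun c : Fin n => c.val + 1 ≤ j.val + 1 ∧ L ≤ lowNat R c).card ≤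
        (maskM R L (j.val + 1)).rank :=
      card_le_rank_mask R hred L (j.val + 1) hL1
    rw [hSins, Finset.card_insert_of_notMem hjnot] at h2
    omega
  · -- upper bound
    intro i hi
    by_contra hgt
    push_neg at hgt
    have hmaskeq : maskM R i (j.val + 1) = maskM R i j.val := by
      ext r c
      simp only [maskM, Matrix.of_apply]
      by_cases hc : c.val + 1 ≤ j.val
      · by_cases hr : i ≤ r.val + 1
        · rw [if_pos ⟨hr, by omega⟩, if_pos ⟨hr, hc⟩]
        · rw [if_neg (show ¬(i ≤ r.val + 1 ∧ c.val + 1 ≤ j.val + 1) from fun h => hr h.1),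
              if_neg (show ¬(i ≤ r.val + 1 ∧ c.val + 1 ≤ j.val) from fun h => hr h.1)]
      · rw [if_neg (show ¬(i ≤ r.val + 1 ∧ c.val + 1 ≤ j.val) from fun h => hc h.2)]
        by_cases hcj : c.val = j.val
        · by_cases hr : i ≤ r.val + 1
          · rw [if_pos ⟨hr, by omega⟩]
            have hcjeq : c = j := Fin.ext hcj
            rw [hcjeq]
            exact eq_zero_of_lowNat_le (show lowNat R j ≤ r.val by omega)
          · rw [if_neg (show ¬(i ≤ r.val + 1 ∧ c.val + 1 ≤ j.val + 1) from fun h => hr h.1)]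
        · rw [if_neg (show ¬(i ≤ r.val + 1 ∧ c.val + 1 ≤ j.val + 1) from fun h => by omega)]
    have : lowerLeftRank D i j.val < lowerLeftRank D i (j.val + 1) := hi
    rw [transfer, transfer, hmaskeq] at this
    exact lt_irrefl _ this
end

section
/- Let R = DV be a decomposition obtained by the lazy reduction algorithm, with R reduced and V invertible upper-triangular. If V[τ_i, τ_j] ≠ 0 for τ_i ≠ τ_j, then low_R(τ_j) < low_R(τ_i), where a zero column has low equal to a dummy minimal value. -/
open Matrix

variable {F : Type*} [Field F] [DecidableEq F] {m n : ℕ}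

/-- Subtract `α` times column `i` from column `j`. -/
def addColMul {k : ℕ} (M : Matrix (Fin k) (Fin n) F) (α : F) (i j : Fin n) :
    Matrix (Fin k) (Fin n) F :=
  fun a b => if b = j then M a b - α * M a i else M a b

/-- Add `α` times row `j` to row `i`. -/
def addRowMul (M : Matrix (Fin n) (Fin n) F) (α : F) (i j : Fin n) :
    Matrix (Fin n) (Fin n) F :=
  fun a b => if a = i then M a b + α * M j b else M a b

/-- The state `(R, V, U)` maintained by the lazy reduction. -/
structure RedState (F : Type*) (m n : ℕ) where
  R : Matrix (Fin m) (Fin n) F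
  V : Matrix (Fin n) (Fin n) F
  U : Matrix (Fin n) (Fin n) F

/-- Inner while-loop of the lazy reduction for column `j`: while the column is
nonzero and some earlier column has the same low, subtract
`α = R[low, j] / R[low, i]` times column `i` from column `j` (in `R` and `V`)
and record the inverse row operation in `U`.  Each iteration strictly decreases
the low of column `j`, so fuel `m + 1` always suffices. -/
noncomputable def reduceColAux : ℕ → RedState F m n → Fin n → RedState F m n
  | 0, s, _ => s
  | fuel + 1, s, j =>
    if h : lowNat s.R j ≠ 0 ∧ ∃ i : Fin n, i < j ∧ lowNat s.R i = lowNat s.R j then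
      let i := h.2.choose
      let r : Fin m := ⟨lowNat s.R j - 1, by
        have hle : lowNat s.R j ≤ m := Finset.sup_le fun a _ => a.isLt
        have := h.1
        omega⟩
      let α := s.R r j / s.R r i
      reduceColAux fuel ⟨addColMul s.R α i j, addColMul s.V α i j, addRowMul s.U α i j⟩ j
    else s

/-- The lazy reduction algorithm: starting from `R = D`, `V = U = 1`, process
the columns in increasing order. -/
noncomputable def lazyReduce (D : Matrix (Fin m) (Fin n) F) : RedState F m n :=
  (List.finRange n).foldl (fun s j => reduceColAux (m + 1) s j) ⟨D, 1, 1⟩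

/-!
Maintain the invariant that every nonzero off-diagonal entry `V a b` lies above the diagonal,
in an already processed column, with `low b < low a`. A step on column `j` subtracts a multiple
of an earlier column `i` with `low i = low j`; this strictly lowers `low j` and no other low.
A nonzero new entry `V a j` needs `V a j ≠ 0` (so `low j < low a` already) or `V a i ≠ 0`
(so `a = i` or `low i < low a`, and `low i` is the old `low j`), so the invariant survives.
-/

lemma lowNat_le_iff {R : Matrix (Fin m) (Fin n) F} {b : Fin n} {t : ℕ} :
    lowNat R b ≤ t ↔ ∀ a : Fin m, R a b ≠ 0 → a.val + 1 ≤ t := by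
  simp [lowNat, Finset.sup_le_iff]

lemma le_lowNat_of_ne_zero {R : Matrix (Fin m) (Fin n) F} {a : Fin m} {b : Fin n}
    (h : R a b ≠ 0) : a.val + 1 ≤ lowNat R b :=
  lowNat_le_iff.mp le_rfl a h

lemma ne_zero_of_val_add_one_eq_lowNat {R : Matrix (Fin m) (Fin n) F} {r : Fin m}
    {b : Fin n} (hr : r.val + 1 = lowNat R b) : R r b ≠ 0 := by
  intro hzero
  have : lowNat R b ≤ r.val := lowNat_le_iff.mpr fun a ha => by
    have hle := le_lowNat_of_ne_zero ha
    have hne : a ≠ r := by rintro rfl; exact ha hzero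
    have : a.val ≠ r.val := Fin.val_ne_of_ne hne
    omega
  omega

lemma lowNat_addColMul_of_ne {M : Matrix (Fin m) (Fin n) F} {α : F} {i j b : Fin n}
    (hb : b ≠ j) : lowNat (addColMul M α i j) b = lowNat M b := by
  simp only [lowNat, addColMul, if_neg hb]

lemma lowNat_addColMul_lt {R : Matrix (Fin m) (Fin n) F} {i j : Fin n} {r : Fin m}
    (hlow : lowNat R i = lowNat R j) (hr : r.val + 1 = lowNat R j) :
    lowNat (addColMul R (R r j / R r i) i j) j < lowNat R j := by
  have hri : R r i ≠ 0 := ne_zero_of_val_add_one_eq_lowNat (hr.trans hlow.symm)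
  suffices lowNat (addColMul R (R r j / R r i) i j) j ≤ r.val by omega
  refine lowNat_le_iff.mpr fun a ha => ?_
  simp only [addColMul, ↓reduceIte] at ha
  have hne : a ≠ r := by
    rintro rfl
    exact ha (by rw [div_mul_cancel₀ _ hri, sub_self])
  have hle : a.val + 1 ≤ lowNat R j := by
    by_cases hj : R a j = 0
    · have hi : R a i ≠ 0 := fun hi => ha (by rw [hj, hi, mul_zero, sub_zero])
      exact hlow ▸ le_lowNat_of_ne_zero hi
    · exact le_lowNat_of_ne_zero hj
  have : a.val ≠ r.val := Fin.val_ne_of_ne hne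
  omega

lemma reduceColAux_induction (P : RedState F m n → Prop) (j : Fin n)
    (step : ∀ (s : RedState F m n) (i : Fin n) (r : Fin m), P s → i < j →
      lowNat s.R i = lowNat s.R j → r.val + 1 = lowNat s.R j →
      P ⟨addColMul s.R (s.R r j / s.R r i) i j, addColMul s.V (s.R r j / s.R r i) i j,
        addRowMul s.U (s.R r j / s.R r i) i j⟩) :
    ∀ (fuel : ℕ) (s : RedState F m n), P s → P (reduceColAux fuel s j) := by
  intro fuel
  induction fuel with
  | zero => exact fun s hs => hs
  | succ fuel ih =>
    intro s hs
    rw [reduceColAux]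
    split_ifs with h
    · obtain ⟨hij, hlow⟩ := h.2.choose_spec
      exact ih _ (step s _ _ hs hij hlow (by simp only; have := h.1; omega))
    · exact hs

/-- The constraint `a < b ∧ b < k` keeps row `j` of `V` zero off the diagonal while column `j`
is processed (`k = j + 1`), so that changing `low j` cannot break the order in other columns. -/
def LazyReduceInv (s : RedState F m n) (k : ℕ) : Prop :=
  ∀ a b : Fin n, a ≠ b → s.V a b ≠ 0 → a < b ∧ b.val < k ∧ lowNat s.R b < lowNat s.R a

lemma LazyReduceInv.mono {s : RedState F m n} {k k' : ℕ} (h : LazyReduceInv s k)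
    (hk : k ≤ k') : LazyReduceInv s k' := fun a b hab hV =>
  let ⟨hlt, hbk, hlow⟩ := h a b hab hV
  ⟨hlt, hbk.trans_le hk, hlow⟩

lemma lazyReduceInv_init (D : Matrix (Fin m) (Fin n) F) :
    LazyReduceInv (⟨D, 1, 1⟩ : RedState F m n) 0 :=
  fun _ _ hab hV => absurd (one_apply_ne hab) hV

lemma LazyReduceInv.addColMul {s : RedState F m n} {i j : Fin n} {r : Fin m}
    (U : Matrix (Fin n) (Fin n) F) (h : LazyReduceInv s (j.val + 1)) (hij : i < j)
    (hlow : lowNat s.R i = lowNat s.R j) (hr : r.val + 1 = lowNat s.R j) :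
    LazyReduceInv ⟨addColMul s.R (s.R r j / s.R r i) i j,
      addColMul s.V (s.R r j / s.R r i) i j, U⟩ (j.val + 1) := by
  have hdec := lowNat_addColMul_lt hlow hr
  intro a b hab hV
  simp only at hV ⊢
  by_cases hbj : b = j
  · subst hbj
    rw [lowNat_addColMul_of_ne hab]
    simp only [_root_.addColMul, ↓reduceIte] at hV
    by_cases hVab : s.V a b = 0
    · have hVai : s.V a i ≠ 0 := fun h0 => hV (by rw [hVab, h0, mul_zero, sub_zero])
      by_cases hai : a = i
      · subst hai
        exact ⟨hij, Nat.lt_succ_self _, hlow ▸ hdec⟩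
      · obtain ⟨hlt, -, hlow'⟩ := h a i hai hVai
        exact ⟨hlt.trans hij, Nat.lt_succ_self _, hdec.trans (hlow ▸ hlow')⟩
    · obtain ⟨hlt, hbk, hlow'⟩ := h a b hab hVab
      exact ⟨hlt, hbk, hdec.trans hlow'⟩
  · simp only [_root_.addColMul, if_neg hbj] at hV
    obtain ⟨hlt, hbk, hlow'⟩ := h a b hab hV
    have haj : a ≠ j := by
      rintro rfl
      exact hbj (Fin.ext (by omega))
    rw [lowNat_addColMul_of_ne hbj, lowNat_addColMul_of_ne haj]
    exact ⟨hlt, hbk, hlow'⟩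

lemma LazyReduceInv.reduceColAux {s : RedState F m n} {j : Fin n} (fuel : ℕ)
    (h : LazyReduceInv s (j.val + 1)) : LazyReduceInv (reduceColAux fuel s j) (j.val + 1) :=
  reduceColAux_induction (LazyReduceInv · (j.val + 1)) j
    (fun _ _ _ hs hij hlow hr => hs.addColMul _ hij hlow hr) fuel s h

lemma LazyReduceInv.lowNat_lt {s : RedState F m n} {k : ℕ} (h : LazyReduceInv s k)
    {a b : Fin n} (hab : a ≠ b) (hV : s.V a b ≠ 0) : lowNat s.R b < lowNat s.R a :=
  (h a b hab hV).2.2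

lemma LazyReduceInv.foldl {l : List (Fin n)} {s : RedState F m n} {k : ℕ}
    (h : LazyReduceInv s k) (hl : ∀ j ∈ l, k ≤ j.val) (hsorted : l.Pairwise (· < ·)) :
    ∃ k', LazyReduceInv (l.foldl (fun s j => _root_.reduceColAux (m + 1) s j) s) k' := by
  induction l generalizing s k with
  | nil => exact ⟨k, h⟩
  | cons j t ih =>
    rw [List.pairwise_cons] at hsorted
    have hj := (h.mono (Nat.le_succ_of_le (hl j List.mem_cons_self))).reduceColAux (m + 1)
    exact ih hj (fun j' hj' => hsorted.1 j' hj') hsorted.2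

/-- If `R = DV` is obtained by the lazy reduction (`R` reduced, `V` invertible
upper-triangular) and `V[τi, τj] ≠ 0` for `τi ≠ τj`, then
`low_R(τj) < low_R(τi)` (zero columns having the dummy minimal low `0`). -/
theorem lazy_V_nonzero_implies_low_lt (D : Matrix (Fin m) (Fin n) F) (τi τj : Fin n)
    (hne : τi ≠ τj) (hV : (lazyReduce D).V τi τj ≠ 0) :
    lowNat (lazyReduce D).R τj < lowNat (lazyReduce D).R τi := by
  obtain ⟨k, hk⟩ := (lazyReduceInv_init D).foldl (fun j _ => Nat.zero_le j.val)
    (List.pairwise_lt_finRange n)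
  exact hk.lowNat_lt hne hV
end

section
/- Let (σ, τ) and (σ', τ') be four distinct simplices such that σ, σ' are contiguous in the filtration and τ, τ' are contiguous in the filtration, with σ paired with τ. Suppose transposing τ and τ' makes τ' paired with σ, and transposing σ and σ' makes τ paired with σ'. If, after performing both transpositions, σ' is not paired with τ', then in the doubly-transposed filtration σ is paired with τ' and σ' is paired with τ, so the original diagram point (f(σ), f(τ)) has multiplicity at least two. -/
open Matrix

/-- A finite abstract simplicial complex: a finite family of nonempty finite
sets closed under taking nonempty subsets. -/
def IsComplex (K : Finset (Finset ℕ)) : Prop :=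
  (∀ τ ∈ K, τ.Nonempty) ∧ ∀ τ ∈ K, ∀ σ : Finset ℕ, σ ⊆ τ → σ.Nonempty → σ ∈ K

/-- The simplices of the complex `K`. -/
abbrev Simp (K : Finset (Finset ℕ)) := {σ : Finset ℕ // σ ∈ K}

/-- A filtration order on the simplices, given by an injective position
function compatible with the face relation. -/
def IsSimpFiltration (K : Finset (Finset ℕ)) (pos : Simp K → ℕ) : Prop :=
  Function.Injective pos ∧ ∀ σ τ : Simp K, σ.1 ⊆ τ.1 → σ ≠ τ → pos σ < pos τ

/-- The (full) boundary matrix of `K` over `ℤ/2`. -/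
def bdry (K : Finset (Finset ℕ)) : Matrix (Simp K) (Simp K) (ZMod 2) :=
  fun σ τ => if σ.1 ⊆ τ.1 ∧ σ.1.card + 1 = τ.1.card then 1 else 0

/-- `σ` is the low of column `τ` of `R` with respect to the order `pos`:
the entry `R σ τ` is nonzero and `σ` is the last such row. -/
def IsLow (K : Finset (Finset ℕ)) (pos : Simp K → ℕ)
    (R : Matrix (Simp K) (Simp K) (ZMod 2)) (τ σ : Simp K) : Prop :=
  R σ τ ≠ 0 ∧ ∀ σ' : Simp K, R σ' τ ≠ 0 → pos σ' ≤ pos σ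

/-- `(σ, τ)` is a persistence pair of the filtration `pos`: in some (hence, by
pairing uniqueness, any) reduced decomposition `R = D V` of the boundary matrix,
with `V` invertible and upper-triangular with respect to `pos`, the low of
column `τ` is `σ`. -/
def PersPair (K : Finset (Finset ℕ)) (pos : Simp K → ℕ) (σ τ : Simp K) : Prop :=
  ∃ R Vm : Matrix (Simp K) (Simp K) (ZMod 2),
    (∀ a b : Simp K, pos b < pos a → Vm a b = 0) ∧ IsUnit Vm ∧
    R = bdry K * Vm ∧
    (∀ τ₁ τ₂ s : Simp K, IsLow K pos R τ₁ s → IsLow K pos R τ₂ s → τ₁ = τ₂) ∧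
    IsLow K pos R τ σ

/-- Swap the positions of `x` and `y` in the filtration order `pos`. -/
def swapPos (K : Finset (Finset ℕ)) (pos : Simp K → ℕ) (x y : Simp K) :
    Simp K → ℕ :=
  fun s => if s = x then pos y else if s = y then pos x else pos s

/-!
Work with the reduced decompositions `R = ∂ V` that define `PersPair`, as in the vineyard update
of Cohen-Steiner, Edelsbrunner and Morozov. Transposing two simplices `x, y` adjacent in the order
changes the row order, which decides the lows of `R`, and the column order, which decides the
triangularity of `V`; the two changes are repaired one after the other. In the new row order only
a column with low `y` and an entry in row `x` changes its low (to `x`), and the one possible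
collision, with the column of low `x`, disappears when the earlier of the two columns is added to
the later one, whose low drops to `y`. In the new column order only the entry `V x y` breaks
triangularity; adding column `x` to column `y` removes it, and if the two columns then share a
low, adding the new column `y` back to column `x` exchanges their lows. So every pair `(s, c)`
becomes a pair `(s', c')` with `s' ∈ {s, swap s}` and `c' ∈ {c, swap c}`.

The transpositions of `σ, σ'` and of `τ, τ'` commute. The first turns the pair `(σ, τ')` into
`(σ, τ')` or `(σ', τ')`, the second turns `(σ', τ)` into `(σ', τ)` or `(σ', τ')`; once
`(σ', τ')` is excluded, both `(σ, τ')` and `(σ', τ)` are pairs with values `(f σ, f τ)`.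
-/

open Function

namespace Matrix

variable {ι R : Type*} [DecidableEq ι] [CommRing R]

theorem BlockTriangular.comp_swap {q : ι → ℕ} {V : Matrix ι ι R} {x y : ι} (hq : Injective q)
    (hadj : q y = q x + 1) (hV : V.BlockTriangular q) (hxy : V x y = 0) :
    V.BlockTriangular (q ∘ Equiv.swap x y) := by
  have hout : ∀ s, s ≠ x → s ≠ y → q s < q x ∨ q y < q s := fun s hx hy => by
    have := hq.ne hx; have := hq.ne hy; omega
  intro a b hab
  simp only [Function.comp_apply, Equiv.swap_apply_def] at hab
  split_ifs at hab <;> subst_vars <;>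
    first
    | exact hxy
    | refine hV ?_
      first
      | omega
      | (have := hout a ‹_› ‹_›; omega)
      | (have := hout b ‹_› ‹_›; omega)

variable [Fintype ι]

theorem isUnit_transvection {i j : ι} (h : i ≠ j) (c : R) : IsUnit (transvection i j c) := by
  simp [isUnit_iff_isUnit_det, h]

theorem BlockTriangular.isUnit_apply_self {q : ι → ℕ} {V : Matrix ι ι R} (hq : Injective q)
    (hV : V.BlockTriangular q) (hu : IsUnit V) (i : ι) : IsUnit (V i i) := by
  let _ : LinearOrder ι := LinearOrder.lift' q hq
  rw [isUnit_iff_isUnit_det, det_of_isUpperTriangular (M := V) hV] at hu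
  exact isUnit_of_dvd_unit (Finset.dvd_prod_of_mem (fun i => V i i) (Finset.mem_univ i)) hu

theorem transpose_mul_transvection_same (M : Matrix ι ι R) (i j : ι) :
    (M * transvection i j 1)ᵀ j = Mᵀ j + Mᵀ i := by
  ext a; simp

theorem transpose_mul_transvection_of_ne (M : Matrix ι ι R) {i j b : ι} (hb : b ≠ j) :
    (M * transvection i j 1)ᵀ b = Mᵀ b := by
  ext a; simp [hb]

end Matrix

namespace Persistence

section ColumnLow

variable {ι : Type*} {q : ι → ℕ} {v w : ι → ZMod 2} {a b u x y : ι}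

def IsColLow (q : ι → ℕ) (v : ι → ZMod 2) (u : ι) : Prop :=
  v u ≠ 0 ∧ ∀ s, v s ≠ 0 → q s ≤ q u

theorem IsColLow.unique (hq : Injective q) (ha : IsColLow q v a) (hb : IsColLow q v b) :
    a = b :=
  hq <| le_antisymm (hb.2 a ha.1) (ha.2 b hb.1)

theorem IsColLow.iff_eq (hq : Injective q) (ha : IsColLow q v a) : IsColLow q v u ↔ u = a :=
  ⟨fun hu => hu.unique hq ha, fun h => h ▸ ha⟩

theorem exists_isColLow [Fintype ι] (hv : v ≠ 0) : ∃ u, IsColLow q v u := by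
  obtain ⟨t, ht⟩ := Function.ne_iff.1 hv
  obtain ⟨u, hu, hmax⟩ :=
    (Finset.univ.filter (v · ≠ 0)).exists_max_image q ⟨t, by simpa using ht⟩
  exact ⟨u, (Finset.mem_filter.1 hu).2, fun s hs => hmax s (by simpa using hs)⟩

theorem IsColLow.add_of_lt (ha : IsColLow q v a) (hb : IsColLow q w b) (hab : q a < q b) :
    IsColLow q (v + w) b := by
  have hvb : v b = 0 := by_contra fun h => (ha.2 b h).not_gt hab
  refine ⟨by simpa [hvb] using hb.1, fun s hs => ?_⟩
  by_cases hvs : v s = 0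
  · exact hb.2 s (by simpa [hvs] using hs)
  · exact (ha.2 s hvs).trans hab.le

theorem IsColLow.add_of_eq_add_one (hq : Injective q) (hv : IsColLow q v u)
    (hw : IsColLow q w u) (hb : (v + w) b ≠ 0) (hbu : q u = q b + 1) :
    IsColLow q (v + w) b := by
  refine ⟨hb, fun s hs => ?_⟩
  have hsu : s ≠ u := by
    rintro rfl
    have : ∀ a c : ZMod 2, a ≠ 0 → c ≠ 0 → a + c = 0 := by decide
    exact hs (this _ _ hv.1 hw.1)
  have hle : q s ≤ q u := by
    by_cases hvs : v s = 0
    · exact hw.2 s (by simpa [hvs] using hs)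
    · exact hv.2 s hvs
  have := hq.ne hsu
  omega

theorem isColLow_add_or [Fintype ι] (hq : Injective q)
    (hvw : ∀ u, IsColLow q v u → ¬ IsColLow q w u) :
    (∀ u, IsColLow q (v + w) u ↔ IsColLow q v u) ∨
      ∀ u, IsColLow q (v + w) u ↔ IsColLow q w u := by
  rcases eq_or_ne w 0 with rfl | hw
  · simp
  rcases eq_or_ne v 0 with rfl | hv
  · simp
  obtain ⟨a, ha⟩ := exists_isColLow (q := q) hv
  obtain ⟨b, hb⟩ := exists_isColLow (q := q) hw
  rcases (hq.ne fun (h : a = b) => hvw a ha (h ▸ hb)).lt_or_gt with hab | hab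
  · exact Or.inr fun u => by rw [(ha.add_of_lt hb hab).iff_eq hq, hb.iff_eq hq]
  · exact Or.inl fun u => by rw [add_comm, (hb.add_of_lt ha hab).iff_eq hq, ha.iff_eq hq]

section AdjacentSwap

variable [DecidableEq ι]

theorem IsColLow.comp_swap (hq : Injective q) (hadj : q y = q x + 1) (h : IsColLow q v u)
    (hu : u = y → v x = 0) : IsColLow (q ∘ Equiv.swap x y) v u := by
  refine ⟨h.1, fun s hs => ?_⟩
  rcases eq_or_ne s u with rfl | hsu
  · exact le_rfl
  have hlt : q s < q u := (h.2 s hs).lt_of_ne (hq.ne hsu)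
  have hsx : u = y → q s ≠ q x := fun huy => hq.ne (by rintro rfl; exact hs (hu huy))
  simp only [Function.comp_apply, Equiv.swap_apply_def]
  rcases eq_or_ne u y with rfl | huy
  · have := hsx rfl
    split_ifs <;> subst_vars <;> omega
  · split_ifs <;> subst_vars <;> omega

theorem IsColLow.comp_swap_of_ne_zero (hq : Injective q) (hadj : q y = q x + 1)
    (h : IsColLow q v y) (hx : v x ≠ 0) : IsColLow (q ∘ Equiv.swap x y) v x := by
  refine ⟨hx, fun s hs => ?_⟩
  rcases eq_or_ne s y with rfl | hsy
  · simp [hadj]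
  have hlt : q s < q y := (h.2 s hs).lt_of_ne (hq.ne hsy)
  simp only [Function.comp_apply, Equiv.swap_apply_def]
  split_ifs <;> subst_vars <;> omega

theorem IsColLow.comp_swap_or (hq : Injective q) (hadj : q y = q x + 1) (h : IsColLow q v u) :
    IsColLow (q ∘ Equiv.swap x y) v u ∨ IsColLow (q ∘ Equiv.swap x y) v (Equiv.swap x y u) := by
  by_cases hu : u = y ∧ v x ≠ 0
  · obtain ⟨rfl, hx⟩ := hu
    exact Or.inr (by simpa using h.comp_swap_of_ne_zero hq hadj hx)
  · exact Or.inl (h.comp_swap hq hadj fun hu' => by simpa using not_and.1 hu hu')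

theorem IsColLow.of_comp_swap (hq : Injective q) (hadj : q y = q x + 1)
    (h : IsColLow (q ∘ Equiv.swap x y) v u) : IsColLow q v u ∨ (u = x ∧ IsColLow q v y) := by
  have hq' : Injective (q ∘ Equiv.swap x y) := hq.comp (Equiv.swap x y).injective
  have hadj' : (q ∘ Equiv.swap x y) x = (q ∘ Equiv.swap x y) y + 1 := by simpa using hadj
  have hback : (q ∘ Equiv.swap x y) ∘ Equiv.swap y x = q := by
    ext s; simp [Equiv.swap_comm]
  by_cases hu : u = x ∧ v y ≠ 0
  · obtain ⟨rfl, hy⟩ := hu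
    exact Or.inr ⟨rfl, hback ▸ h.comp_swap_of_ne_zero hq' hadj' hy⟩
  · exact Or.inl (hback ▸ h.comp_swap hq' hadj' fun hu' => by simpa using not_and.1 hu hu')

end AdjacentSwap

end ColumnLow

section Reduction

open Matrix

variable {ι : Type*} {q q' : ι → ℕ} {x y : ι} {M M' : Matrix ι ι (ZMod 2)}

def IsReduced (q : ι → ℕ) (M : Matrix ι ι (ZMod 2)) : Prop :=
  ∀ c₁ c₂ u, IsColLow q (Mᵀ c₁) u → IsColLow q (Mᵀ c₂) u → c₁ = c₂

theorem IsReduced.of_iff (hM : IsReduced q M) {e : ι → ι} (he : Injective e)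
    (h : ∀ c u, IsColLow q' (M'ᵀ c) u ↔ IsColLow q (Mᵀ (e c)) u) : IsReduced q' M' :=
  fun _ _ _ h₁ h₂ => he (hM _ _ _ ((h _ _).1 h₁) ((h _ _).1 h₂))

variable [DecidableEq ι]

theorem IsReduced.comp_swap (hq : Injective q) (hadj : q y = q x + 1) (hM : IsReduced q M)
    (hno : ∀ e₁ e₂, IsColLow q (Mᵀ e₁) x → IsColLow q (Mᵀ e₂) y → M x e₂ = 0) :
    IsReduced (q ∘ Equiv.swap x y) M := by
  intro d₁ d₂ u h₁ h₂
  rcases h₁.of_comp_swap hq hadj with h₁' | ⟨rfl, h₁'⟩ <;>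
    rcases h₂.of_comp_swap hq hadj with h₂' | ⟨hu, h₂'⟩
  · exact hM _ _ _ h₁' h₂'
  · exact absurd (hno _ _ (hu ▸ h₁') h₂') (hu ▸ h₂.1)
  · exact absurd (hno _ _ h₂' h₁') h₁.1
  · exact hM _ _ _ h₁' h₂'

section Collision

variable [Fintype ι] {e₁ e₂ c₁ c₂ c s : ι}

theorem isColLow_comp_swap_mul_transvection (hq : Injective q) (hadj : q y = q x + 1)
    (he₁ : IsColLow q (Mᵀ e₁) x) (he₂ : IsColLow q (Mᵀ e₂) y) (hxe₂ : M x e₂ ≠ 0)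
    (hc : c₁ = e₁ ∧ c₂ = e₂ ∨ c₁ = e₂ ∧ c₂ = e₁) :
    IsColLow (q ∘ Equiv.swap x y) ((M * transvection c₁ c₂ 1)ᵀ c₁) x ∧
      IsColLow (q ∘ Equiv.swap x y) ((M * transvection c₁ c₂ 1)ᵀ c₂) y := by
  have hxy : x ≠ y := by rintro rfl; omega
  have hne : c₁ ≠ c₂ := by
    have : e₁ ≠ e₂ := fun h => hxy (he₁.unique hq (h ▸ he₂))
    rcases hc with ⟨rfl, rfl⟩ | ⟨rfl, rfl⟩
    exacts [this, this.symm]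
  have hx₁ : IsColLow (q ∘ Equiv.swap x y) (Mᵀ e₁) x :=
    he₁.comp_swap hq hadj fun h => absurd h hxy
  have hx₂ : IsColLow (q ∘ Equiv.swap x y) (Mᵀ e₂) x := he₂.comp_swap_of_ne_zero hq hadj hxe₂
  have hye₁ : M y e₁ = 0 := by_contra fun h => (he₁.2 y h).not_gt (by omega)
  have hsum : IsColLow (q ∘ Equiv.swap x y) (Mᵀ e₁ + Mᵀ e₂) y :=
    hx₁.add_of_eq_add_one (hq.comp (Equiv.swap x y).injective) hx₂
      (by simpa [hye₁] using he₂.1) (by simp [hadj])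
  rw [transpose_mul_transvection_of_ne _ hne, transpose_mul_transvection_same]
  rcases hc with ⟨rfl, rfl⟩ | ⟨rfl, rfl⟩
  · exact ⟨hx₁, by rwa [add_comm]⟩
  · exact ⟨hx₂, hsum⟩

theorem IsReduced.comp_swap_mul_transvection (hq : Injective q) (hadj : q y = q x + 1)
    (hM : IsReduced q M) (he₁ : IsColLow q (Mᵀ e₁) x) (he₂ : IsColLow q (Mᵀ e₂) y)
    (hxe₂ : M x e₂ ≠ 0) (hc : c₁ = e₁ ∧ c₂ = e₂ ∨ c₁ = e₂ ∧ c₂ = e₁) :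
    IsReduced (q ∘ Equiv.swap x y) (M * transvection c₁ c₂ 1) := by
  obtain ⟨hnew₁, hnew₂⟩ := isColLow_comp_swap_mul_transvection hq hadj he₁ he₂ hxe₂ hc
  have hq' : Injective (q ∘ Equiv.swap x y) := hq.comp (Equiv.swap x y).injective
  have hxy : x ≠ y := by rintro rfl; omega
  have cls : ∀ d u, IsColLow (q ∘ Equiv.swap x y) ((M * transvection c₁ c₂ 1)ᵀ d) u →
      (d = c₁ ∧ u = x) ∨ (d = c₂ ∧ u = y) ∨ (u ≠ x ∧ u ≠ y ∧ IsColLow q (Mᵀ d) u) := by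
    intro d u hu
    by_cases hd₁ : d = c₁
    · exact Or.inl ⟨hd₁, hu.unique hq' (hd₁ ▸ hnew₁)⟩
    by_cases hd₂ : d = c₂
    · exact Or.inr (Or.inl ⟨hd₂, hu.unique hq' (hd₂ ▸ hnew₂)⟩)
    have hd : d ≠ e₁ ∧ d ≠ e₂ := by rcases hc with ⟨rfl, rfl⟩ | ⟨rfl, rfl⟩ <;> tauto
    rw [transpose_mul_transvection_of_ne _ hd₂] at hu
    rcases hu.of_comp_swap hq hadj with h | ⟨-, h⟩
    · exact Or.inr (Or.inr ⟨fun hux => hd.1 (hM _ _ _ (hux ▸ h) he₁),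
        fun huy => hd.2 (hM _ _ _ (huy ▸ h) he₂), h⟩)
    · exact (hd.2 (hM _ _ _ h he₂)).elim
  intro d₁ d₂ u h₁ h₂
  rcases cls _ _ h₁ with ⟨rfl, rfl⟩ | ⟨rfl, rfl⟩ | ⟨hx₁, hy₁, h₁'⟩ <;>
    rcases cls _ _ h₂ with ⟨rfl, hu⟩ | ⟨rfl, hu⟩ | ⟨hx₂, hy₂, h₂'⟩
  all_goals first
    | rfl
    | contradiction
    | exact hM _ _ _ h₁' h₂'
    | exact (hxy hu).elim
    | exact (hxy hu.symm).elim

theorem IsReduced.isColLow_comp_swap_mul_transvection_or (hq : Injective q)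
    (hadj : q y = q x + 1) (hM : IsReduced q M) (he₁ : IsColLow q (Mᵀ e₁) x)
    (he₂ : IsColLow q (Mᵀ e₂) y) (hxe₂ : M x e₂ ≠ 0)
    (hc : c₁ = e₁ ∧ c₂ = e₂ ∨ c₁ = e₂ ∧ c₂ = e₁) (hs : IsColLow q (Mᵀ c) s) :
    IsColLow (q ∘ Equiv.swap x y) ((M * transvection c₁ c₂ 1)ᵀ c) s ∨
      IsColLow (q ∘ Equiv.swap x y) ((M * transvection c₁ c₂ 1)ᵀ c) (Equiv.swap x y s) := by
  obtain ⟨hnew₁, hnew₂⟩ := isColLow_comp_swap_mul_transvection hq hadj he₁ he₂ hxe₂ hc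
  have hrow : c = e₁ ∨ c = e₂ → s = x ∨ s = y := by
    rintro (rfl | rfl)
    exacts [Or.inl (hs.unique hq he₁), Or.inr (hs.unique hq he₂)]
  by_cases hc₁ : c = c₁
  · subst hc₁
    rcases hrow (by tauto) with rfl | rfl
    · exact Or.inl hnew₁
    · exact Or.inr (by simpa using hnew₁)
  by_cases hc₂ : c = c₂
  · subst hc₂
    rcases hrow (by tauto) with rfl | rfl
    · exact Or.inr (by simpa using hnew₂)
    · exact Or.inl hnew₂
  have hce₂ : c ≠ e₂ := by rcases hc with ⟨rfl, rfl⟩ | ⟨rfl, rfl⟩ <;> tauto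
  rw [transpose_mul_transvection_of_ne _ hc₂]
  exact Or.inl (hs.comp_swap hq hadj fun h => (hce₂ (hM _ _ _ (h ▸ hs) he₂)).elim)

end Collision

end Reduction

section Transposition

open Matrix

variable {ι : Type*} [Fintype ι] [DecidableEq ι] {qr qc : ι → ℕ} {x y : ι}
  {D V : Matrix ι ι (ZMod 2)}

theorem blockTriangular_mul_transvection_comp_swap (hqc : Injective qc)
    (hadj : qc y = qc x + 1) (hV : V.BlockTriangular qc) (hVu : IsUnit V) (hxy : V x y ≠ 0) :
    (V * transvection x y 1).BlockTriangular (qc ∘ Equiv.swap x y) := by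
  refine (hV.mul (blockTriangular_transvection (by omega) 1)).comp_swap hqc hadj ?_
  have one_of_ne_zero : ∀ a : ZMod 2, a ≠ 0 → a = 1 := by decide
  simp only [mul_transvection_apply_same, one_mul, one_of_ne_zero _ hxy,
    one_of_ne_zero _ (hV.isUnit_apply_self hqc hVu x).ne_zero]
  decide

theorem exists_reduced_comp_swap_rows (hqr : Injective qr) (hqc : Injective qc)
    (hadj : qr y = qr x + 1) (hV : V.BlockTriangular qc) (hVu : IsUnit V)
    (hR : IsReduced qr (D * V)) :
    ∃ V', V'.BlockTriangular qc ∧ IsUnit V' ∧ IsReduced (qr ∘ Equiv.swap x y) (D * V') ∧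
      ∀ c s, IsColLow qr ((D * V)ᵀ c) s →
        IsColLow (qr ∘ Equiv.swap x y) ((D * V')ᵀ c) s ∨
          IsColLow (qr ∘ Equiv.swap x y) ((D * V')ᵀ c) (Equiv.swap x y s) := by
  by_cases hcol : ∃ e₁ e₂, IsColLow qr ((D * V)ᵀ e₁) x ∧ IsColLow qr ((D * V)ᵀ e₂) y ∧
      (D * V) x e₂ ≠ 0
  · obtain ⟨e₁, e₂, he₁, he₂, hxe₂⟩ := hcol
    have hne : e₁ ≠ e₂ := by
      rintro rfl
      have := he₁.unique hqr he₂
      subst this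
      omega
    obtain ⟨c₁, c₂, hc, h⟩ : ∃ c₁ c₂, (c₁ = e₁ ∧ c₂ = e₂ ∨ c₁ = e₂ ∧ c₂ = e₁) ∧ qc c₁ < qc c₂ := by
      rcases (hqc.ne hne).lt_or_gt with h | h
      exacts [⟨_, _, Or.inl ⟨rfl, rfl⟩, h⟩, ⟨_, _, Or.inr ⟨rfl, rfl⟩, h⟩]
    refine ⟨V * transvection c₁ c₂ 1, hV.mul (blockTriangular_transvection h.le 1),
      hVu.mul (isUnit_transvection (hqc.ne_iff.1 h.ne) 1), ?_⟩
    rw [← Matrix.mul_assoc]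
    exact ⟨hR.comp_swap_mul_transvection hqr hadj he₁ he₂ hxe₂ hc,
      fun c s => hR.isColLow_comp_swap_mul_transvection_or hqr hadj he₁ he₂ hxe₂ hc⟩
  · push Not at hcol
    exact ⟨V, hV, hVu, hR.comp_swap hqr hadj hcol, fun c s hs => hs.comp_swap_or hqr hadj⟩

theorem exists_reduced_comp_swap_cols (hqr : Injective qr) (hqc : Injective qc)
    (hadj : qc y = qc x + 1) (hV : V.BlockTriangular qc) (hVu : IsUnit V)
    (hR : IsReduced qr (D * V)) :
    ∃ V', V'.BlockTriangular (qc ∘ Equiv.swap x y) ∧ IsUnit V' ∧ IsReduced qr (D * V') ∧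
      ∀ c s, IsColLow qr ((D * V)ᵀ c) s →
        IsColLow qr ((D * V')ᵀ c) s ∨ IsColLow qr ((D * V')ᵀ (Equiv.swap x y c)) s := by
  have hxy : x ≠ y := by rintro rfl; omega
  by_cases h0 : V x y = 0
  · exact ⟨V, hV.comp_swap hqc hadj h0, hVu, hR, fun c s hs => Or.inl hs⟩
  set R := D * V
  set V₁ := V * transvection x y 1
  have hV₁ : V₁.BlockTriangular (qc ∘ Equiv.swap x y) :=
    blockTriangular_mul_transvection_comp_swap hqc hadj hV hVu h0
  have hV₁u : IsUnit V₁ := hVu.mul (isUnit_transvection hxy 1)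
  have hR₁ : D * V₁ = R * transvection x y 1 := (Matrix.mul_assoc _ _ _).symm
  rcases isColLow_add_or hqr (v := Rᵀ y) (w := Rᵀ x) fun u hy hx => hxy (hR _ _ _ hx hy)
    with hlow | hlow
  · have key : ∀ c u, IsColLow qr ((D * V₁)ᵀ c) u ↔ IsColLow qr (Rᵀ (id c)) u := by
      intro c u
      rw [hR₁]
      rcases eq_or_ne c y with rfl | hc
      · rw [transpose_mul_transvection_same]; exact hlow u
      · rw [transpose_mul_transvection_of_ne _ hc]; rfl
    exact ⟨V₁, hV₁, hV₁u, hR.of_iff injective_id key, fun c s hs => Or.inl ((key c s).2 hs)⟩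
  · have key : ∀ c u, IsColLow qr ((D * (V₁ * transvection y x 1))ᵀ c) u ↔
        IsColLow qr (Rᵀ (Equiv.swap x y c)) u := by
      intro c u
      rw [← Matrix.mul_assoc, hR₁]
      rcases eq_or_ne c x with rfl | hcx
      · rw [transpose_mul_transvection_same, transpose_mul_transvection_of_ne _ hxy,
          transpose_mul_transvection_same, Equiv.swap_apply_left, add_left_comm,
          ZModModule.add_self, add_zero]
      rcases eq_or_ne c y with rfl | hcy
      · rw [transpose_mul_transvection_of_ne _ hxy.symm, transpose_mul_transvection_same,
          Equiv.swap_apply_right]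
        exact hlow u
      · rw [transpose_mul_transvection_of_ne _ hcx, transpose_mul_transvection_of_ne _ hcy,
          Equiv.swap_apply_of_ne_of_ne hcx hcy]
    exact ⟨V₁ * transvection y x 1, hV₁.mul (blockTriangular_transvection (by simp [hadj]) 1),
      hV₁u.mul (isUnit_transvection hxy.symm 1), hR.of_iff (Equiv.swap x y).injective key,
      fun c s hs => Or.inr ((key _ s).2 (by rwa [Equiv.swap_apply_self]))⟩

end Transposition

end Persistence

section Filtration

open Persistence

variable {K : Finset (Finset ℕ)} {pos : Simp K → ℕ} {s c t x y : Simp K}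

theorem swapPos_eq_comp (pos : Simp K → ℕ) (x y : Simp K) :
    swapPos K pos x y = pos ∘ Equiv.swap x y := by
  funext t
  simp only [swapPos, Function.comp_apply, Equiv.swap_apply_def]
  split_ifs <;> rfl

theorem swapPos_injective (hpos : Injective pos) (x y : Simp K) :
    Injective (swapPos K pos x y) := by
  rw [swapPos_eq_comp]
  exact hpos.comp (Equiv.swap x y).injective

theorem swapPos_apply_of_ne (pos : Simp K → ℕ) (hx : t ≠ x) (hy : t ≠ y) :
    swapPos K pos x y t = pos t := by
  simp [swapPos, hx, hy]

theorem swapPos_comm (pos : Simp K → ℕ) (x y : Simp K) :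
    swapPos K pos x y = swapPos K pos y x := by
  rw [swapPos_eq_comp, swapPos_eq_comp, Equiv.swap_comm]

theorem swapPos_swapPos (pos : Simp K → ℕ) {a b c d : Simp K} (hac : a ≠ c) (had : a ≠ d)
    (hbc : b ≠ c) (hbd : b ≠ d) :
    swapPos K (swapPos K pos a b) c d = swapPos K (swapPos K pos c d) a b := by
  funext t
  simp only [swapPos]
  split_ifs <;> simp_all

theorem persPair_iff : PersPair K pos s c ↔ ∃ V, V.BlockTriangular pos ∧ IsUnit V ∧
    IsReduced pos (bdry K * V) ∧ IsColLow pos ((bdry K * V)ᵀ c) s := by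
  constructor
  · rintro ⟨_, V, hV, hVu, rfl, hR, hlow⟩
    exact ⟨V, hV, hVu, hR, hlow⟩
  · rintro ⟨V, hV, hVu, hR, hlow⟩
    exact ⟨_, V, hV, hVu, rfl, hR, hlow⟩

theorem PersPair.exists_swapPos (hpos : Injective pos)
    (hadj : pos y = pos x + 1 ∨ pos x = pos y + 1) (h : PersPair K pos s c) :
    ∃ s' c', (s' = s ∨ s' = Equiv.swap x y s) ∧ (c' = c ∨ c' = Equiv.swap x y c) ∧
      PersPair K (swapPos K pos x y) s' c' := by
  wlog hxy : pos y = pos x + 1 generalizing x y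
  · rw [swapPos_comm, Equiv.swap_comm]
    exact this hadj.symm (hadj.resolve_left hxy)
  obtain ⟨V, hV, hVu, hR, hlow⟩ := persPair_iff.1 h
  obtain ⟨V₁, hV₁, hV₁u, hR₁, track₁⟩ := exists_reduced_comp_swap_rows hpos hpos hxy hV hVu hR
  obtain ⟨V₂, hV₂, hV₂u, hR₂, track₂⟩ :=
    exists_reduced_comp_swap_cols (hpos.comp (Equiv.swap x y).injective) hpos hxy hV₁ hV₁u hR₁
  rw [swapPos_eq_comp]
  rcases track₁ c s hlow with h₁ | h₁ <;> rcases track₂ _ _ h₁ with h₂ | h₂ <;>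
    exact ⟨_, _, by simp, by simp, persPair_iff.2 ⟨V₂, hV₂, hV₂u, hR₂, h₂⟩⟩

theorem PersPair.swapPos_or_swap_birth (hpos : Injective pos)
    (hadj : pos y = pos x + 1 ∨ pos x = pos y + 1) (h : PersPair K pos s c) (hcx : c ≠ x)
    (hcy : c ≠ y) :
    PersPair K (swapPos K pos x y) s c ∨ PersPair K (swapPos K pos x y) (Equiv.swap x y s) c := by
  obtain ⟨s', c', hs', hc', h'⟩ := h.exists_swapPos hpos hadj
  rw [Equiv.swap_apply_of_ne_of_ne hcx hcy, or_self] at hc'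
  subst hc'
  rcases hs' with rfl | rfl <;> simp [h']

theorem PersPair.swapPos_or_swap_death (hpos : Injective pos)
    (hadj : pos y = pos x + 1 ∨ pos x = pos y + 1) (h : PersPair K pos s c) (hsx : s ≠ x)
    (hsy : s ≠ y) :
    PersPair K (swapPos K pos x y) s c ∨ PersPair K (swapPos K pos x y) s (Equiv.swap x y c) := by
  obtain ⟨s', c', hs', hc', h'⟩ := h.exists_swapPos hpos hadj
  rw [Equiv.swap_apply_of_ne_of_ne hsx hsy, or_self] at hs'
  subst hs'
  rcases hc' with rfl | rfl <;> simp [h']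

end Filtration

theorem double_transposition_multiplicity_general (K : Finset (Finset ℕ))
    (pos : Simp K → ℕ) (hpos : IsSimpFiltration K pos)
    (σ σ' τ τ' : Simp K)
    (hd1 : σ ≠ σ') (hd3 : σ ≠ τ) (hd4 : σ ≠ τ')
    (hd5 : σ' ≠ τ) (hd6 : σ' ≠ τ')
    (hσadj : pos σ' = pos σ + 1 ∨ pos σ = pos σ' + 1)
    (hτadj : pos τ' = pos τ + 1 ∨ pos τ = pos τ' + 1)
    (f : Simp K → ℝ) (hfσ : f σ' = f σ) (hfτ : f τ' = f τ)
    (ht : PersPair K (swapPos K pos τ τ') σ τ')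
    (hs : PersPair K (swapPos K pos σ σ') σ' τ)
    (hnot : ¬ PersPair K (swapPos K (swapPos K pos τ τ') σ σ') σ' τ') :
    PersPair K (swapPos K (swapPos K pos τ τ') σ σ') σ τ' ∧
    PersPair K (swapPos K (swapPos K pos τ τ') σ σ') σ' τ ∧
    2 ≤ Set.ncard {pq : Simp K × Simp K |
      PersPair K (swapPos K (swapPos K pos τ τ') σ σ') pq.1 pq.2 ∧
      f pq.1 = f σ ∧ f pq.2 = f τ} := by
  have hcomm := swapPos_swapPos pos hd3.symm hd5.symm hd4.symm hd6.symm
  have h₁ : PersPair K (swapPos K (swapPos K pos τ τ') σ σ') σ τ' := by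
    refine (ht.swapPos_or_swap_birth (swapPos_injective hpos.1 _ _) ?_ hd4.symm
      hd6.symm).resolve_right ?_
    · rwa [swapPos_apply_of_ne pos hd3 hd4, swapPos_apply_of_ne pos hd5 hd6]
    · rwa [Equiv.swap_apply_left]
  have h₂ : PersPair K (swapPos K (swapPos K pos τ τ') σ σ') σ' τ := by
    rw [hcomm] at hnot ⊢
    refine (hs.swapPos_or_swap_death (swapPos_injective hpos.1 _ _) ?_ hd5 hd6).resolve_right ?_
    · rwa [swapPos_apply_of_ne pos hd3.symm hd5.symm, swapPos_apply_of_ne pos hd4.symm hd6.symm]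
    · rwa [Equiv.swap_apply_left]
  refine ⟨h₁, h₂, (Set.one_lt_ncard_iff (Set.toFinite _)).2
    ⟨(σ, τ'), (σ', τ), ⟨h₁, rfl, hfτ⟩, ⟨h₂, hfσ, rfl⟩, fun h => hd1 (congrArg Prod.fst h)⟩⟩

/-- Case analysis in the consistency-of-critical-sets proof: given contiguous
pairs `σ, σ'` and `τ, τ'` with `σ` paired with `τ`, such that transposing
`τ, τ'` pairs `σ` with `τ'` and transposing `σ, σ'` pairs `σ'` with `τ`, if
after both transpositions `σ'` is not paired with `τ'`, then in the
doubly-transposed filtration `σ` is paired with `τ'` and `σ'` is paired with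
`τ`; in particular the diagram point `(f σ, f τ)` has multiplicity at least
two there. -/
theorem double_transposition_multiplicity (K : Finset (Finset ℕ))
    (hK : IsComplex K) (pos : Simp K → ℕ) (hpos : IsSimpFiltration K pos)
    (σ σ' τ τ' : Simp K)
    (hd1 : σ ≠ σ') (hd2 : τ ≠ τ') (hd3 : σ ≠ τ) (hd4 : σ ≠ τ')
    (hd5 : σ' ≠ τ) (hd6 : σ' ≠ τ')
    (hσadj : pos σ' = pos σ + 1 ∨ pos σ = pos σ' + 1)
    (hτadj : pos τ' = pos τ + 1 ∨ pos τ = pos τ' + 1)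
    (f : Simp K → ℝ) (hfσ : f σ' = f σ) (hfτ : f τ' = f τ)
    (hpair : PersPair K pos σ τ)
    (hfil₁ : IsSimpFiltration K (swapPos K pos τ τ'))
    (hfil₂ : IsSimpFiltration K (swapPos K pos σ σ'))
    (hfil₃ : IsSimpFiltration K (swapPos K (swapPos K pos τ τ') σ σ'))
    (ht : PersPair K (swapPos K pos τ τ') σ τ')
    (hs : PersPair K (swapPos K pos σ σ') σ' τ)
    (hnot : ¬ PersPair K (swapPos K (swapPos K pos τ τ') σ σ') σ' τ') :
    PersPair K (swapPos K (swapPos K pos τ τ') σ σ') σ τ' ∧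
    PersPair K (swapPos K (swapPos K pos τ τ') σ σ') σ' τ ∧
    2 ≤ Set.ncard {pq : Simp K × Simp K |
      PersPair K (swapPos K (swapPos K pos τ τ') σ σ') pq.1 pq.2 ∧
      f pq.1 = f σ ∧ f pq.2 = f τ} :=
  double_transposition_multiplicity_general K pos hpos σ σ' τ τ' hd1 hd3 hd4 hd5 hd6 hσadj hτadj f
    hfσ hfτ ht hs hnot
end
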